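/- arXiv:2307.06772 — 4 statements merged into one kernel-verified Lean document; each statement's English description precedes it below -/
import Mathlib

section
/- Let v be the first vertex of the path P satisfying the cover condition. Then C* := Partition(v) ∩ P_{⪯v} is a minimum weight vertex cover of the subpath P_{⪯v}. -/
open Finset

/-- `C` is a vertex cover of the subpath of the path `P = (v_0, …, v_{n-1})`
induced by the vertices `v_lo, v_{lo+1}, …, v_{hi-1}` (half-open interval `[lo, hi)`);
the edges of this subpath are `{v_i, v_{i+1}}` for `lo ≤ i` and `i + 1 < hi`. -/
def IsCoverOn (lo hi : ℕ) (C : Finset ℕ) : Prop :=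
  (∀ j ∈ C, lo ≤ j ∧ j < hi) ∧ ∀ i : ℕ, lo ≤ i → i + 1 < hi → (i ∈ C ∨ i + 1 ∈ C)

/-- The total weight `ω(C) = ∑_{v ∈ C} ω(v)` of a set of vertices. -/
def wsum (ω : ℕ → ℝ) (C : Finset ℕ) : ℝ := ∑ j ∈ C, ω j

/-- `C` is a minimum weight vertex cover (MWVC) of the subpath on the vertices `[lo, hi)`. -/
def IsMWVCOn (ω : ℕ → ℝ) (lo hi : ℕ) (C : Finset ℕ) : Prop :=
  IsCoverOn lo hi C ∧ ∀ D : Finset ℕ, IsCoverOn lo hi D → wsum ω C ≤ wsum ω D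

/-- `Partition(v_l) ∩ P_{⪯ v_l}`: the vertices up to (and including) `v_l` lying on the
same side of the path's bipartition as `v_l`. -/
def sameSide (l : ℕ) : Finset ℕ := (range (l + 1)).filter fun j => j % 2 = l % 2

/-- `P_{⪯ v_l} ∖ Partition(v_l)`: the vertices up to `v_l` on the opposite side. -/
def otherSide (l : ℕ) : Finset ℕ := (range (l + 1)).filter fun j => j % 2 ≠ l % 2

/-- `v_l` satisfies the (weak) cover condition. -/
def CoverCond (ω : ℕ → ℝ) (l : ℕ) : Prop := wsum ω (sameSide l) ≤ wsum ω (otherSide l)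

/-- `v_l` satisfies the strict cover condition. -/
def StrictCoverCond (ω : ℕ → ℝ) (l : ℕ) : Prop := wsum ω (sameSide l) < wsum ω (otherSide l)

/-!
By induction along the path: for `j` up to the first vertex satisfying the cover condition,
a cover of `P_{⪯ v_j}` that contains `v_j` weighs at least `ω(Partition(v_j) ∩ P_{⪯ v_j})`,
and one that avoids `v_j` weighs at least `ω(P_{⪯ v_j} ∖ Partition(v_j))`: deleting `v_j`
(resp. using `v_{j-1} ∈ D`) reduces to `j - 1`, where the failed cover condition makes the
opposite side the cheaper bound. At the first vertex `v_l` satisfying the condition the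
same side is the cheaper of the two bounds, and it is itself a cover.
-/

namespace IsCoverOn

variable {lo hi : ℕ} {D : Finset ℕ}

theorem eq_empty (hD : IsCoverOn lo lo D) : D = ∅ :=
  eq_empty_of_forall_notMem fun j hj => by have := hD.1 j hj; omega

theorem erase_top (hD : IsCoverOn lo (hi + 1) D) : IsCoverOn lo hi (D.erase hi) := by
  refine ⟨fun j hj => ?_, fun i hlo hi' => ?_⟩
  · have := hD.1 j (mem_of_mem_erase hj)
    have := ne_of_mem_erase hj
    omega
  · rcases hD.2 i hlo (by omega) with h | h
    · exact .inl (mem_erase.2 ⟨by omega, h⟩)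
    · exact .inr (mem_erase.2 ⟨by omega, h⟩)

theorem of_top_notMem (hD : IsCoverOn lo (hi + 1) D) (h : hi ∉ D) : IsCoverOn lo hi D :=
  erase_eq_of_notMem h ▸ hD.erase_top

theorem mem_of_succ_notMem (hD : IsCoverOn lo (hi + 2) D) (hlo : lo ≤ hi) (h : hi + 1 ∉ D) :
    hi ∈ D :=
  (hD.2 hi hlo (by omega)).resolve_right h

end IsCoverOn

theorem isCoverOn_sameSide (l : ℕ) : IsCoverOn 0 (l + 1) (sameSide l) := by
  refine ⟨fun j hj => ?_, fun i _ hi => ?_⟩ <;>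
    simp only [sameSide, mem_filter, mem_range] at * <;> omega

theorem sameSide_zero : sameSide 0 = {0} := by
  ext x; simp only [sameSide, mem_filter, mem_range, mem_singleton]; omega

theorem otherSide_zero : otherSide 0 = ∅ := by
  ext x; simp only [otherSide, mem_filter, mem_range, notMem_empty, iff_false]; omega

theorem otherSide_succ (j : ℕ) : otherSide (j + 1) = sameSide j := by
  ext x; simp only [sameSide, otherSide, mem_filter, mem_range]; omega

theorem sameSide_succ (j : ℕ) : sameSide (j + 1) = insert (j + 1) (otherSide j) := by
  ext x; simp only [sameSide, otherSide, mem_insert, mem_filter, mem_range]; omega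

theorem wsum_sameSide_succ (ω : ℕ → ℝ) (j : ℕ) :
    wsum ω (sameSide (j + 1)) = ω (j + 1) + wsum ω (otherSide j) := by
  rw [sameSide_succ, wsum, sum_insert (by simp [otherSide])]
  rfl

theorem wsum_eq_add_wsum_erase (ω : ℕ → ℝ) {D : Finset ℕ} {j : ℕ} (hj : j ∈ D) :
    wsum ω D = ω j + wsum ω (D.erase j) :=
  (add_sum_erase D ω hj).symm

theorem wsum_side_le_of_isCoverOn {ω : ℕ → ℝ} {j : ℕ} (hfirst : ∀ i < j, ¬ CoverCond ω i)
    {D : Finset ℕ} (hD : IsCoverOn 0 (j + 1) D) :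
    wsum ω (if j ∈ D then sameSide j else otherSide j) ≤ wsum ω D := by
  induction j generalizing D with
  | zero =>
    have hE : D.erase 0 = ∅ := hD.erase_top.eq_empty
    split_ifs with h0
    · rw [wsum_eq_add_wsum_erase ω h0, hE, sameSide_zero]
      simp [wsum]
    · rw [erase_eq_of_notMem h0] at hE
      rw [hE, otherSide_zero]
  | succ j ih =>
    have ihE := fun E => ih (fun i hi => hfirst i (by omega)) (D := E)
    split_ifs with htop
    · have hE := hD.erase_top
      have hopp : wsum ω (otherSide j) ≤ wsum ω (D.erase (j + 1)) := by
        have hj := not_le.1 (hfirst j (by omega))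
        have := ihE _ hE
        split_ifs at this <;> linarith
      rw [wsum_eq_add_wsum_erase ω htop, wsum_sameSide_succ]
      linarith
    · have hj := hD.mem_of_succ_notMem (Nat.zero_le j) htop
      simpa [hj, otherSide_succ] using ihE _ (hD.of_top_notMem htop)

theorem stmt_0_general (l : ℕ) (ω : ℕ → ℝ)
    (hcc : CoverCond ω l) (hfirst : ∀ j, j < l → ¬ CoverCond ω j) :
    IsMWVCOn ω 0 (l + 1) (sameSide l) := by
  refine ⟨isCoverOn_sameSide l, fun D hD => ?_⟩
  have hside := wsum_side_le_of_isCoverOn hfirst hD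
  unfold CoverCond at hcc
  split_ifs at hside <;> linarith

/-- If `v_l` is the first vertex of the path satisfying the cover
condition, then `Partition(v_l) ∩ P_{⪯ v_l}` is a MWVC of the subpath `P_{⪯ v_l}`. -/
theorem stmt_0 (n l : ℕ) (ω : ℕ → ℝ) (hl : l < n)
    (hcc : CoverCond ω l) (hfirst : ∀ j, j < l → ¬ CoverCond ω j) :
    IsMWVCOn ω 0 (l + 1) (sameSide l) :=
  stmt_0_general l ω hcc hfirst
end

section
/- Let C be a vertex cover of the path P containing two adjacent vertices, and let v_a, v_{a+1} be the first such pair, i.e., v_a, v_{a+1} ∈ C and C ∩ {v_1, …, v_a} contains no two adjacent vertices. If v_a does not satisfy the cover condition, then C' := (P_{≺v_a} ∩ Partition(v_{a+1})) ∪ {u ∈ C : v_{a+1} ⪯ u} is a vertex cover of P with ω(C') < ω(C); in particular, C is not a minimum weight vertex cover of P. -/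
/-!
Since `C` covers every edge but contains no adjacent pair before `v_a`, its vertices up to `v_a`
alternate, so `C ∩ P_{⪯v_a}` is exactly `Partition(v_a) ∩ P_{⪯v_a}`. The cover `C'` swaps this
prefix for the other side of the bipartition, which still covers the prefix edges, while the edge
`{v_a, v_{a+1}}` stays covered by `v_{a+1}`. The weight changes by
`ω(P_{⪯v_a} ∖ Partition(v_a)) - ω(P_{⪯v_a} ∩ Partition(v_a))`, negative when the cover condition
fails at `v_a`.
-/

open Finset

/-- The set `C'` of the paper. -/
def flipPrefix (a : ℕ) (C : Finset ℕ) : Finset ℕ :=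
  (range a).filter (fun j => j % 2 = (a + 1) % 2) ∪ C.filter (fun u => a + 1 ≤ u)

lemma lt_of_isCoverOn_of_mem {lo n j : ℕ} {C : Finset ℕ} (hC : IsCoverOn lo n C) (hj : j ∈ C) :
    j < n :=
  (hC.1 j hj).2

lemma not_isMWVCOn_of_isCoverOn_of_wsum_lt {ω : ℕ → ℝ} {lo n : ℕ} {C D : Finset ℕ}
    (hD : IsCoverOn lo n D) (hlt : wsum ω D < wsum ω C) : ¬ IsMWVCOn ω lo n C :=
  fun hmin => (hmin.2 D hD).not_gt hlt

lemma mem_iff_not_mem_succ_of_isCoverOn {n a i : ℕ} {C : Finset ℕ} (hC : IsCoverOn 0 n C)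
    (haC : a ∈ C) (hfirst : ∀ i : ℕ, i + 1 ≤ a → ¬ (i ∈ C ∧ i + 1 ∈ C)) (hi : i < a) :
    i ∈ C ↔ i + 1 ∉ C := by
  have hedge := hC.2 i (Nat.zero_le i) (by have := lt_of_isCoverOn_of_mem hC haC; omega)
  have hpair := hfirst i hi
  tauto

lemma mem_iff_mod_two_eq_of_alternating {a j : ℕ} {C : Finset ℕ} (haC : a ∈ C)
    (halt : ∀ i < a, i ∈ C ↔ i + 1 ∉ C) (hj : j ≤ a) : j ∈ C ↔ j % 2 = a % 2 := by
  induction hj using Nat.decreasingInduction with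
  | self => simpa using haC
  | of_succ k hk ih =>
    rw [halt k hk, ih]
    omega

lemma filter_le_eq_sameSide {a : ℕ} {C : Finset ℕ}
    (hpar : ∀ j ≤ a, j ∈ C ↔ j % 2 = a % 2) : C.filter (fun u => u ≤ a) = sameSide a := by
  ext j
  simp only [sameSide, mem_filter, mem_range]
  constructor
  · rintro ⟨hj, hja⟩
    exact ⟨by omega, (hpar j hja).1 hj⟩
  · rintro ⟨hj, hjpar⟩
    exact ⟨(hpar j (by omega)).2 hjpar, by omega⟩

lemma filter_range_mod_two_eq_otherSide (a : ℕ) :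
    (range a).filter (fun j => j % 2 = (a + 1) % 2) = otherSide a := by
  ext j
  simp only [otherSide, mem_filter, mem_range]
  omega

lemma wsum_eq_wsum_filter_le_add_wsum_filter_succ_le (ω : ℕ → ℝ) (a : ℕ) (C : Finset ℕ) :
    wsum ω C = wsum ω (C.filter (fun u => u ≤ a)) + wsum ω (C.filter (fun u => a + 1 ≤ u)) := by
  unfold wsum
  rw [← sum_filter_add_sum_filter_not C (fun u => u ≤ a)]
  congr 2
  exact filter_congr fun u _ => by omega

lemma wsum_flipPrefix (ω : ℕ → ℝ) (a : ℕ) (C : Finset ℕ) :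
    wsum ω (flipPrefix a C) = wsum ω (otherSide a) + wsum ω (C.filter (fun u => a + 1 ≤ u)) := by
  rw [← filter_range_mod_two_eq_otherSide]
  refine sum_union (disjoint_left.2 fun j hj hj' => ?_)
  simp only [mem_filter, mem_range] at hj hj'
  omega

lemma wsum_flipPrefix_lt {ω : ℕ → ℝ} {a : ℕ} {C : Finset ℕ}
    (hpar : ∀ j ≤ a, j ∈ C ↔ j % 2 = a % 2) (hncc : ¬ CoverCond ω a) :
    wsum ω (flipPrefix a C) < wsum ω C := by
  rw [wsum_flipPrefix, wsum_eq_wsum_filter_le_add_wsum_filter_succ_le ω a C,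
    filter_le_eq_sameSide hpar]
  unfold CoverCond at hncc
  linarith

lemma isCoverOn_flipPrefix {n a : ℕ} {C : Finset ℕ} (hC : IsCoverOn 0 n C) (ha1C : a + 1 ∈ C) :
    IsCoverOn 0 n (flipPrefix a C) := by
  have han := lt_of_isCoverOn_of_mem hC ha1C
  refine ⟨fun j hj => ?_, fun i _ hi => ?_⟩
  · rcases mem_union.1 hj with h | h
    · simp only [mem_filter, mem_range] at h
      omega
    · exact hC.1 j (mem_filter.1 h).1
  simp only [flipPrefix, mem_union, mem_filter, mem_range]
  rcases lt_trichotomy i a with hia | rfl | hai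
  · omega
  · exact Or.inr (Or.inr ⟨ha1C, le_rfl⟩)
  · rcases hC.2 i (Nat.zero_le i) hi with h | h
    · exact Or.inl (Or.inr ⟨h, hai⟩)
    · exact Or.inr (Or.inr ⟨h, by omega⟩)

theorem stmt_5_general (n a : ℕ) (ω : ℕ → ℝ) (C : Finset ℕ)
    (hC : IsCoverOn 0 n C)
    (haC : a ∈ C) (ha1C : a + 1 ∈ C)
    (hfirst : ∀ i : ℕ, i + 1 ≤ a → ¬ (i ∈ C ∧ i + 1 ∈ C))
    (hncc : ¬ CoverCond ω a) :
    IsCoverOn 0 n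
        ((range a).filter (fun j => j % 2 = (a + 1) % 2) ∪ C.filter (fun u => a + 1 ≤ u)) ∧
      wsum ω
        ((range a).filter (fun j => j % 2 = (a + 1) % 2) ∪ C.filter (fun u => a + 1 ≤ u)) <
        wsum ω C ∧
      ¬ IsMWVCOn ω 0 n C := by
  have hpar : ∀ j ≤ a, j ∈ C ↔ j % 2 = a % 2 := fun j =>
    mem_iff_mod_two_eq_of_alternating haC
      (fun i hi => mem_iff_not_mem_succ_of_isCoverOn hC haC hfirst hi)
  have hcover : IsCoverOn 0 n (flipPrefix a C) := isCoverOn_flipPrefix hC ha1C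
  have hlt : wsum ω (flipPrefix a C) < wsum ω C := wsum_flipPrefix_lt hpar hncc
  exact ⟨hcover, hlt, not_isMWVCOn_of_isCoverOn_of_wsum_lt hcover hlt⟩

/-- Let `C` be a vertex cover of the path containing the adjacent pair
`v_a, v_{a+1}` as its first adjacent pair. If `v_a` does not satisfy the cover condition,
then `C' := (P_{≺ v_a} ∩ Partition(v_{a+1})) ∪ {u ∈ C : v_{a+1} ⪯ u}` is a vertex cover of
the path which is strictly cheaper than `C`; in particular `C` is not a MWVC. -/
theorem stmt_5 (n a : ℕ) (ω : ℕ → ℝ) (C : Finset ℕ)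
    (hC : IsCoverOn 0 n C)
    (ha : a + 1 < n) (haC : a ∈ C) (ha1C : a + 1 ∈ C)
    (hfirst : ∀ i : ℕ, i + 1 ≤ a → ¬ (i ∈ C ∧ i + 1 ∈ C))
    (hncc : ¬ CoverCond ω a) :
    IsCoverOn 0 n
        ((range a).filter (fun j => j % 2 = (a + 1) % 2) ∪ C.filter (fun u => a + 1 ≤ u)) ∧
      wsum ω
        ((range a).filter (fun j => j % 2 = (a + 1) % 2) ∪ C.filter (fun u => a + 1 ≤ u)) <
        wsum ω C ∧
      ¬ IsMWVCOn ω 0 n C :=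
  stmt_5_general n a ω C hC haC ha1C hfirst hncc
end

section
/- In Stackelberg Vertex Cover on a path, let p ∈ Pr be a priceable vertex, π : Pr → ℝ a pricing, x ≥ π(p), and let π' := π[p ↦ x] be the pricing agreeing with π except that p gets price x. If some minimum weight vertex cover of P w.r.t. w_{π'} contains p, then rev(π') ≥ rev(π) + (x − π(p)). In particular, choosing a price for p strictly below a value at which p is still contained in a minimum weight vertex cover strictly reduces the leader's revenue. -/
open Finset

/-- The weights induced on the vertices by the pricing `π` on the priceable vertices `Pr`
and the fixed weights `ω` on the fixed-price vertices. -/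
def wpr (Pr : Finset ℕ) (ω π : ℕ → ℝ) : ℕ → ℝ := fun v => if v ∈ Pr then π v else ω v

/-- The leader's revenue under the pricing `π`: the maximum, over all minimum weight vertex
covers `C` of the path w.r.t. the induced weights, of `∑_{p ∈ C ∩ Pr} π(p)`
(the follower breaks ties in favor of the leader). -/
noncomputable def rev (n : ℕ) (Pr : Finset ℕ) (ω π : ℕ → ℝ) : ℝ :=
  sSup { r : ℝ | ∃ C : Finset ℕ, IsMWVCOn (wpr Pr ω π) 0 n C ∧ r = ∑ p ∈ C ∩ Pr, π p }

/-
Raising the price of `p` from `π p` to `x` adds `x - π p` to the weight of exactly those covers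
that contain `p`. Since some minimum cover for the new weights contains `p`, every minimum cover
`C` for the old weights is still minimum for the new ones; if moreover `x > π p`, then `C` must
contain `p` (otherwise it would beat that new minimum cover). So every revenue `∑_{C ∩ Pr} π`
attained under `π` is attained, increased by `x - π p`, under `π[p ↦ x]`.
-/

theorem Finset.sum_update_of_mem_eq_add {ι G : Type*} [DecidableEq ι] [AddCommGroup G]
    {s : Finset ι} {i : ι} (h : i ∈ s) (f : ι → G) (b : G) :
    ∑ j ∈ s, Function.update f i b j = ∑ j ∈ s, f j + (b - f i) := by
  rw [sum_update_of_mem h, sum_eq_add_sum_sdiff_singleton_of_mem h f]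
  abel

theorem wpr_update {Pr : Finset ℕ} {p : ℕ} (hp : p ∈ Pr) (ω π : ℕ → ℝ) (x : ℝ) :
    wpr Pr ω (Function.update π p x) = Function.update (wpr Pr ω π) p x := by
  ext v
  obtain rfl | hv := eq_or_ne v p
  · simp [wpr, hp]
  · simp [wpr, hv]

theorem IsCoverOn.subset_Ico {lo hi : ℕ} {C : Finset ℕ} (hC : IsCoverOn lo hi C) :
    C ⊆ Ico lo hi :=
  fun j hj => mem_Ico.mpr (hC.1 j hj)

theorem isCoverOn_Ico (lo hi : ℕ) : IsCoverOn lo hi (Ico lo hi) :=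
  ⟨fun _ hj => mem_Ico.mp hj, fun i hlo hhi => Or.inl (mem_Ico.mpr ⟨hlo, by omega⟩)⟩

theorem exists_isMWVCOn (w : ℕ → ℝ) (lo hi : ℕ) : ∃ C, IsMWVCOn w lo hi C := by
  classical
  let covers := (Ico lo hi).powerset.filter (IsCoverOn lo hi)
  have hne : covers.Nonempty := ⟨_, mem_filter.mpr ⟨mem_powerset_self _, isCoverOn_Ico lo hi⟩⟩
  obtain ⟨C, hC, hmin⟩ := exists_min_image covers (wsum w) hne
  refine ⟨C, (mem_filter.mp hC).2, fun D hD => hmin D ?_⟩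
  exact mem_filter.mpr ⟨mem_powerset.mpr hD.subset_Ico, hD⟩

section WeightIncrease

variable {w : ℕ → ℝ} {lo hi p : ℕ} {x : ℝ} {C C' : Finset ℕ}

theorem wsum_update_of_notMem (hp : p ∉ C) : wsum (Function.update w p x) C = wsum w C :=
  sum_update_of_notMem hp w x

theorem wsum_update_of_mem (hp : p ∈ C) :
    wsum (Function.update w p x) C = wsum w C + (x - w p) :=
  sum_update_of_mem_eq_add hp w x

theorem wsum_update_le (hx : w p ≤ x) :
    wsum (Function.update w p x) C ≤ wsum w C + (x - w p) := by
  by_cases hp : p ∈ C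
  · exact (wsum_update_of_mem hp).le
  · rw [wsum_update_of_notMem hp]
    linarith

theorem IsMWVCOn.update (hx : w p ≤ x) (hC : IsMWVCOn w lo hi C)
    (hC' : IsMWVCOn (Function.update w p x) lo hi C') (hpC' : p ∈ C') :
    IsMWVCOn (Function.update w p x) lo hi C := by
  refine ⟨hC.1, fun D hD => ?_⟩
  calc wsum (Function.update w p x) C ≤ wsum w C + (x - w p) := wsum_update_le hx
    _ ≤ wsum w C' + (x - w p) := by linarith [hC.2 C' hC'.1]
    _ = wsum (Function.update w p x) C' := (wsum_update_of_mem hpC').symm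
    _ ≤ wsum (Function.update w p x) D := hC'.2 D hD

theorem IsMWVCOn.mem_of_update (hx : w p < x) (hC : IsMWVCOn w lo hi C)
    (hC' : IsMWVCOn (Function.update w p x) lo hi C') (hpC' : p ∈ C') : p ∈ C := by
  by_contra hp
  have hle := hC'.2 C hC.1
  rw [wsum_update_of_notMem hp, wsum_update_of_mem hpC'] at hle
  linarith [hC.2 C' hC'.1]

end WeightIncrease

section Revenue

variable {n : ℕ} {Pr : Finset ℕ} {ω π : ℕ → ℝ}

theorem bddAbove_revenues :
    BddAbove {r : ℝ | ∃ C : Finset ℕ, IsMWVCOn (wpr Pr ω π) 0 n C ∧ r = ∑ p ∈ C ∩ Pr, π p} := by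
  classical
  refine ((Ico 0 n).powerset.image fun C => ∑ p ∈ C ∩ Pr, π p).bddAbove.mono ?_
  rintro r ⟨C, hC, rfl⟩
  exact mem_image.mpr ⟨C, mem_powerset.mpr hC.1.subset_Ico, rfl⟩

theorem le_rev {C : Finset ℕ} (hC : IsMWVCOn (wpr Pr ω π) 0 n C) :
    ∑ p ∈ C ∩ Pr, π p ≤ rev n Pr ω π :=
  le_csSup bddAbove_revenues ⟨C, hC, rfl⟩

theorem rev_le {b : ℝ} (h : ∀ C, IsMWVCOn (wpr Pr ω π) 0 n C → ∑ p ∈ C ∩ Pr, π p ≤ b) :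
    rev n Pr ω π ≤ b := by
  obtain ⟨C, hC⟩ := exists_isMWVCOn (wpr Pr ω π) 0 n
  refine csSup_le ⟨_, C, hC, rfl⟩ ?_
  rintro r ⟨D, hD, rfl⟩
  exact h D hD

end Revenue

theorem stmt_13_general (n : ℕ) (Pr : Finset ℕ) (ω : ℕ → ℝ)
    (p : ℕ) (hp : p ∈ Pr) (π : ℕ → ℝ) (x : ℝ) (hx : π p ≤ x)
    (hin : ∃ C : Finset ℕ,
      IsMWVCOn (wpr Pr ω (Function.update π p x)) 0 n C ∧ p ∈ C) :
    rev n Pr ω π + (x - π p) ≤ rev n Pr ω (Function.update π p x) := by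
  obtain rfl | hlt := hx.eq_or_lt
  · simp
  obtain ⟨C', hC', hpC'⟩ := hin
  rw [wpr_update hp] at hC'
  have hwp : wpr Pr ω π p = π p := if_pos hp
  suffices h : rev n Pr ω π ≤ rev n Pr ω (Function.update π p x) - (x - π p) by linarith
  refine rev_le fun C hC => ?_
  have hpC : p ∈ C := hC.mem_of_update (hwp ▸ hlt) hC' hpC'
  have hC'' : IsMWVCOn (wpr Pr ω (Function.update π p x)) 0 n C := by
    rw [wpr_update hp]
    exact hC.update (hwp ▸ hx) hC' hpC'
  have hrev := le_rev hC''
  rw [sum_update_of_mem_eq_add (mem_inter.mpr ⟨hpC, hp⟩)] at hrev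
  linarith

/-- In StackVC on a path (no two priceable vertices adjacent), let
`p ∈ Pr`, `x ≥ π(p)`, and `π' = π[p ↦ x]`. If some MWVC w.r.t. `w_{π'}` contains `p`,
then `rev(π') ≥ rev(π) + (x − π(p))`. -/
theorem stmt_13 (n : ℕ) (Pr : Finset ℕ) (hPrn : ∀ q ∈ Pr, q < n)
    (hNoAdj : ∀ q ∈ Pr, q + 1 ∉ Pr)
    (ω : ℕ → ℝ) (hω : ∀ v : ℕ, v ∉ Pr → 0 ≤ ω v)
    (p : ℕ) (hp : p ∈ Pr) (π : ℕ → ℝ) (x : ℝ) (hx : π p ≤ x)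
    (hin : ∃ C : Finset ℕ,
      IsMWVCOn (wpr Pr ω (Function.update π p x)) 0 n C ∧ p ∈ C) :
    rev n Pr ω π + (x - π p) ≤ rev n Pr ω (Function.update π p x) :=
  stmt_13_general n Pr ω p hp π x hx hin
end

section
/- Let P = (v_1, …, v_n) be a path with vertex weights ω : V → ℝ and let u = v_j with 2 ≤ j ≤ n−1 be an interior vertex such that no minimum weight vertex cover of P contains u. Then every minimum weight vertex cover of P contains both neighbors v_{j−1} and v_{j+1}, and the minimum vertex-cover weight of P equals the minimum vertex-cover weight of the subpath (v_1, …, v_{j−2}) plus ω(v_{j−1}) + ω(v_{j+1}) plus the minimum vertex-cover weight of the subpath (v_{j+2}, …, v_n) (where the minimum cover weight of an empty subpath is 0). -/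
/-!
A cover avoiding the interior vertex `v_m` must contain both of its neighbours, and then it
splits as a cover of the prefix before `v_{m-1}`, the pair `{v_{m-1}, v_{m+1}}` and a cover of
the suffix after `v_{m+1}`. Conversely any covers of prefix and suffix spliced with that pair
give a cover of the whole path. Comparing weights in both directions against the minimum
covers yields the equality.
-/

open Finset

namespace IsCoverOn

variable {lo hi k m : ℕ} {C C₁ C₂ : Finset ℕ}

theorem neighbors_mem (hC : IsCoverOn lo hi C) (hlo : lo < m) (hhi : m + 1 < hi)
    (hm : m ∉ C) : m - 1 ∈ C ∧ m + 1 ∈ C := by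
  have hleft := hC.2 (m - 1) (by omega) (by omega)
  have hright := hC.2 m (by omega) hhi
  rw [Nat.sub_add_cancel (by omega : 1 ≤ m)] at hleft
  exact ⟨hleft.resolve_right hm, hright.resolve_left hm⟩

theorem filter_lt (hC : IsCoverOn lo hi C) (hk : k ≤ hi) :
    IsCoverOn lo k (C.filter (· < k)) := by
  refine ⟨fun j hj => ?_, fun i hi hik => ?_⟩
  · rw [mem_filter] at hj
    exact ⟨(hC.1 j hj.1).1, hj.2⟩
  · simp only [mem_filter]
    rcases hC.2 i hi (by omega) with h | h
    · exact Or.inl ⟨h, by omega⟩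
    · exact Or.inr ⟨h, hik⟩

theorem filter_ge (hC : IsCoverOn lo hi C) (hk : lo ≤ k) :
    IsCoverOn k hi (C.filter (k ≤ ·)) := by
  refine ⟨fun j hj => ?_, fun i hki hih => ?_⟩
  · rw [mem_filter] at hj
    exact ⟨hj.2, (hC.1 j hj.1).2⟩
  · simp only [mem_filter]
    rcases hC.2 i (by omega) hih with h | h
    · exact Or.inl ⟨h, hki⟩
    · exact Or.inr ⟨h, by omega⟩

theorem union (h₁ : IsCoverOn lo k C₁) (h₂ : IsCoverOn k hi C₂) (hlo : lo ≤ k) (hhi : k ≤ hi)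
    (hk : k - 1 ∈ C₁ ∨ k ∈ C₂) : IsCoverOn lo hi (C₁ ∪ C₂) := by
  refine ⟨fun j hj => ?_, fun i hloi hih => ?_⟩
  · rcases mem_union.1 hj with h | h
    · have := h₁.1 j h; omega
    · have := h₂.1 j h; omega
  · simp only [mem_union]
    rcases lt_trichotomy (i + 1) k with hik | hik | hik
    · rcases h₁.2 i hloi hik with h | h
      · exact Or.inl (Or.inl h)
      · exact Or.inr (Or.inl h)
    · rcases hk with h | h
      · exact Or.inl (Or.inl (by rwa [← hik, Nat.add_sub_cancel] at h))
      · exact Or.inr (Or.inr (hik ▸ h))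
    · rcases h₂.2 i (by omega) hih with h | h
      · exact Or.inl (Or.inr h)
      · exact Or.inr (Or.inr h)

theorem disjoint {a b c d : ℕ} (h₁ : IsCoverOn a b C₁) (h₂ : IsCoverOn c d C₂) (hbc : b ≤ c) :
    Disjoint C₁ C₂ :=
  disjoint_left.2 fun j hj₁ hj₂ => by
    have := h₁.1 j hj₁
    have := h₂.1 j hj₂
    omega

end IsCoverOn

theorem isCoverOn_pair (m : ℕ) : IsCoverOn (m - 1) (m + 2) {m - 1, m + 1} := by
  refine ⟨fun j hj => ?_, fun i hi hi' => ?_⟩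
  · simp only [mem_insert, mem_singleton] at hj
    omega
  · simp only [mem_insert, mem_singleton]
    omega

section Splice

variable {lo hi m : ℕ} {X Y : Finset ℕ}

theorem IsCoverOn.splice (hX : IsCoverOn lo (m - 1) X) (hY : IsCoverOn (m + 2) hi Y)
    (hlo : lo ≤ m - 1) (hhi : m + 2 ≤ hi) : IsCoverOn lo hi (X ∪ {m - 1, m + 1} ∪ Y) := by
  have hXpair : IsCoverOn lo (m + 2) (X ∪ {m - 1, m + 1}) :=
    hX.union (isCoverOn_pair m) hlo (by omega) (Or.inr (mem_insert_self _ _))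
  exact hXpair.union hY (by omega) hhi (Or.inl (by simp))

theorem wsum_splice (ω : ℕ → ℝ) (hX : IsCoverOn lo (m - 1) X) (hY : IsCoverOn (m + 2) hi Y) :
    wsum ω (X ∪ {m - 1, m + 1} ∪ Y) = wsum ω X + (ω (m - 1) + ω (m + 1)) + wsum ω Y := by
  have hXY : Disjoint (X ∪ {m - 1, m + 1}) Y :=
    disjoint_union_left.2 ⟨hX.disjoint hY (by omega), (isCoverOn_pair m).disjoint hY le_rfl⟩
  rw [wsum, sum_union hXY, sum_union (hX.disjoint (isCoverOn_pair m) le_rfl), sum_pair (by omega)]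
  rfl

end Splice

theorem eq_filter_union_pair_union {m : ℕ} {C : Finset ℕ} (hm : m ∉ C) (hprev : m - 1 ∈ C)
    (hnext : m + 1 ∈ C) :
    C = C.filter (· < m - 1) ∪ {m - 1, m + 1} ∪ C.filter (m + 2 ≤ ·) := by
  ext j
  simp only [mem_union, mem_filter, mem_insert, mem_singleton]
  constructor
  · intro hj
    have : j ≠ m := fun h => hm (h ▸ hj)
    simp only [hj, true_and]
    omega
  · rintro ((⟨hj, -⟩ | rfl | rfl) | ⟨hj, -⟩) <;> assumption

/-- Let `v_m` (an interior vertex, `1 ≤ m ≤ n-2`, 0-indexed) be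
contained in no MWVC of the path. Then every MWVC contains both neighbors `v_{m-1}` and
`v_{m+1}`, and the minimum cover weight of the path equals the minimum cover weight of
the prefix `(v_0, …, v_{m-2})` plus `ω(v_{m-1}) + ω(v_{m+1})` plus the minimum cover
weight of the suffix `(v_{m+2}, …, v_{n-1})`. -/
theorem stmt_15 (n m : ℕ) (ω : ℕ → ℝ) (hm1 : 1 ≤ m) (hm2 : m + 1 < n)
    (hout : ∀ C : Finset ℕ, IsMWVCOn ω 0 n C → m ∉ C) :
    (∀ C : Finset ℕ, IsMWVCOn ω 0 n C → (m - 1 ∈ C ∧ m + 1 ∈ C)) ∧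
      (∀ C C₁ C₂ : Finset ℕ, IsMWVCOn ω 0 n C → IsMWVCOn ω 0 (m - 1) C₁ →
        IsMWVCOn ω (m + 2) n C₂ →
        wsum ω C = wsum ω C₁ + (ω (m - 1) + ω (m + 1)) + wsum ω C₂) := by
  have hnbrs : ∀ C, IsMWVCOn ω 0 n C → m - 1 ∈ C ∧ m + 1 ∈ C :=
    fun C hC => hC.1.neighbors_mem hm1 hm2 (hout C hC)
  refine ⟨hnbrs, fun C C₁ C₂ hC hC₁ hC₂ => le_antisymm ?_ ?_⟩
  · rw [← wsum_splice ω hC₁.1 hC₂.1]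
    exact hC.2 _ (hC₁.1.splice hC₂.1 (Nat.zero_le _) hm2)
  · obtain ⟨hprev, hnext⟩ := hnbrs C hC
    have hA := hC.1.filter_lt (k := m - 1) (by omega)
    have hB := hC.1.filter_ge (k := m + 2) (Nat.zero_le _)
    calc wsum ω C₁ + (ω (m - 1) + ω (m + 1)) + wsum ω C₂
        ≤ wsum ω (C.filter (· < m - 1)) + (ω (m - 1) + ω (m + 1)) +
            wsum ω (C.filter (m + 2 ≤ ·)) := by
          linarith [hC₁.2 _ hA, hC₂.2 _ hB]
      _ = wsum ω C := by
          rw [← wsum_splice ω hA hB, ← eq_filter_union_pair_union (hout C hC) hprev hnext]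
end
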